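/- arXiv:1905.00279 — 4 statements merged into one kernel-verified Lean document; each statement's English description precedes it below -/
import Mathlib

section
/- Let p, n ≥ 1 and fix real constants L ≥ m > 0. Let A ∈ ℝ^{np×np}, B ∈ ℝ^{np×p}, C, D ∈ ℝ^{p×np}, and assume that at least one of the pairs (A,C), (A,D) is observable, i.e. either [the only v ∈ ℝ^{np} with C A^k v = 0 for all k ∈ ℕ is v = 0] or [the only v ∈ ℝ^{np} with D A^k v = 0 for all k ∈ ℕ is v = 0]. Then the following are equivalent: (i) for every H ∈ S(m,L,p) with global minimizer z⋆ there exists x⋆ ∈ ℝ^{np} such that x⋆ = A x⋆ + B ∇H(C x⋆) and D x⋆ = C x⋆ = z⋆; (ii) there exists a matrix D† ∈ ℝ^{np×p} such that D D† = I_p, C D† = I_p and (A − I_{np}) D† = 0. -/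
noncomputable section

/-- Matrix action on Euclidean space vectors. -/
def mv {a b : ℕ} (M : Matrix (Fin a) (Fin b) ℝ) (x : EuclideanSpace ℝ (Fin b)) :
    EuclideanSpace ℝ (Fin a) :=
  (WithLp.equiv 2 _).symm (M.mulVec (WithLp.equiv 2 _ x))

/-- The class `S(m,L,p)` of differentiable, `m`-strongly convex functions with
`L`-Lipschitz gradient. -/
def SClass (m L : ℝ) (p : ℕ) : Set (EuclideanSpace ℝ (Fin p) → ℝ) :=
  {H | Differentiable ℝ H ∧
       ConvexOn ℝ Set.univ (fun x => H x - m / 2 * ‖x‖ ^ 2) ∧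
       LipschitzWith L.toNNReal (fun x => gradient H x)}

open InnerProductSpace

variable {E : Type*} [NormedAddCommGroup E] [InnerProductSpace ℝ E] [CompleteSpace E]

lemma grad_quad (m : ℝ) (z x : E) :
    HasGradientAt (fun x => m / 2 * ‖x - z‖ ^ 2) (m • (x - z)) x := by
  rw [hasGradientAt_iff_hasFDerivAt]
  have h := (((hasFDerivAt_id x).sub_const z).norm_sq).const_mul (m / 2)
  simp only [id_eq] at h
  refine h.congr_fderiv ?_
  ext y
  simp [real_inner_smul_left]
  ring

lemma quad_mem_SClass (m L : ℝ) (hm : 0 < m) (hmL : m ≤ L) (p : ℕ)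
    (z : EuclideanSpace ℝ (Fin p)) :
    (fun x => m / 2 * ‖x - z‖ ^ 2) ∈ SClass m L p := by
  have hL0 : (0:ℝ) ≤ L := le_of_lt (lt_of_lt_of_le hm hmL)
  refine ⟨fun x => ((grad_quad m z x).hasFDerivAt).differentiableAt, ?_, ?_⟩
  · refine ⟨convex_univ, ?_⟩
    intro x _ y _ a b ha hb hab
    have key : ∀ w : EuclideanSpace ℝ (Fin p),
        m / 2 * ‖w - z‖ ^ 2 - m / 2 * ‖w‖ ^ 2
          = - m * ⟪w, z⟫_ℝ + m / 2 * ‖z‖ ^ 2 := by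
      intro w
      rw [norm_sub_sq_real]
      ring
    simp only [key, smul_eq_mul]
    rw [inner_add_left, real_inner_smul_left, real_inner_smul_left]
    apply le_of_eq
    linear_combination (m / 2 * ‖z‖ ^ 2) * hab.symm
  · have hg : (fun x => gradient (fun x => m / 2 * ‖x - z‖ ^ 2) x)
        = fun x : EuclideanSpace ℝ (Fin p) => m • (x - z) := by
      funext x
      exact (grad_quad m z x).gradient
    rw [hg]
    apply LipschitzWith.of_dist_le_mul
    intro x y
    rw [dist_eq_norm]
    have : m • (x - z) - m • (y - z) = m • (x - y) := by
      rw [← smul_sub]; congr 1; abel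
    rw [this, norm_smul, Real.norm_eq_abs, abs_of_pos hm, dist_eq_norm]
    have : (Real.toNNReal L : ℝ) = L := Real.coe_toNNReal L hL0
    rw [this]
    exact mul_le_mul_of_nonneg_right (le_trans hmL (le_refl L)) (norm_nonneg _)

theorem stmt_0 (p n : ℕ) (hp : 1 ≤ p) (hn : 1 ≤ n) (m L : ℝ) (hm : 0 < m) (hmL : m ≤ L)
    (A : Matrix (Fin (n*p)) (Fin (n*p)) ℝ) (B : Matrix (Fin (n*p)) (Fin p) ℝ)
    (C D : Matrix (Fin p) (Fin (n*p)) ℝ)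
    (hobs :
      (∀ v : Fin (n*p) → ℝ, (∀ k : ℕ, C.mulVec ((A ^ k).mulVec v) = 0) → v = 0) ∨
      (∀ v : Fin (n*p) → ℝ, (∀ k : ℕ, D.mulVec ((A ^ k).mulVec v) = 0) → v = 0)) :
    (∀ H ∈ SClass m L p, ∀ zstar : EuclideanSpace ℝ (Fin p), (∀ x, H zstar ≤ H x) →
      ∃ xstar : EuclideanSpace ℝ (Fin (n*p)),
        xstar = mv A xstar + mv B (gradient H (mv C xstar)) ∧
        mv D xstar = zstar ∧ mv C xstar = zstar)
    ↔
    (∃ Ddag : Matrix (Fin (n*p)) (Fin p) ℝ,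
        D * Ddag = 1 ∧ C * Ddag = 1 ∧ (A - 1) * Ddag = 0) := by
  constructor
  · intro hi
    -- apply (i) to quadratic functions centered at basis vectors
    have key : ∀ z : EuclideanSpace ℝ (Fin p), ∃ x : Fin (n*p) → ℝ,
        A.mulVec x = x ∧ D.mulVec x = z ∧ C.mulVec x = z := by
      intro z
      obtain ⟨xstar, h1, h2, h3⟩ := hi (fun x => m / 2 * ‖x - z‖ ^ 2)
        (quad_mem_SClass m L hm hmL p z) z (by
          intro x
          rw [sub_self, norm_zero]
          nlinarith [sq_nonneg ‖x - z‖, hm.le])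
      have hgrad : gradient (fun x => m / 2 * ‖x - z‖ ^ 2) (mv C xstar) = 0 := by
        rw [(grad_quad m z (mv C xstar)).gradient, h3, sub_self, smul_zero]
      rw [hgrad] at h1
      have hB0 : mv B (0 : EuclideanSpace ℝ (Fin p)) = 0 := by
        simp [mv]
      rw [hB0, add_zero] at h1
      refine ⟨(WithLp.equiv 2 _) xstar, ?_, ?_, ?_⟩
      · have := congrArg (WithLp.equiv 2 _) h1
        simp only [mv, Equiv.apply_symm_apply] at this
        exact this.symm
      · have := congrArg (WithLp.equiv 2 _) h2
        simp only [mv, Equiv.apply_symm_apply] at this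
        exact this
      · have := congrArg (WithLp.equiv 2 _) h3
        simp only [mv, Equiv.apply_symm_apply] at this
        exact this
    choose xf hxA hxD hxC using fun j : Fin p =>
      key ((WithLp.equiv 2 _).symm (Pi.single j 1))
    refine ⟨Matrix.of (fun i j => xf j i), ?_, ?_, ?_⟩
    · ext i j
      have := congrFun (hxD j) i
      simpa [Matrix.mul_apply, Matrix.mulVec, dotProduct, Matrix.one_apply,
        Pi.single_apply, eq_comm] using this
    · ext i j
      have := congrFun (hxC j) i
      simpa [Matrix.mul_apply, Matrix.mulVec, dotProduct, Matrix.one_apply,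
        Pi.single_apply, eq_comm] using this
    · ext i j
      have := congrFun (hxA j) i
      simp only [Matrix.sub_mul, Matrix.one_mul, Matrix.sub_apply, Matrix.zero_apply,
        sub_eq_zero]
      simpa [Matrix.mul_apply, Matrix.mulVec, dotProduct] using this
  · rintro ⟨Ddag, hD, hC, hA⟩ H hH zstar hmin
    have hgrad0 : gradient H zstar = 0 := by
      have hloc : IsLocalMin H zstar := Filter.Eventually.of_forall hmin
      rw [gradient, hloc.fderiv_eq_zero, map_zero]
    have hADdag : A * Ddag = Ddag := by
      have := hA
      rw [Matrix.sub_mul, Matrix.one_mul, sub_eq_zero] at this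
      exact this
    refine ⟨mv Ddag zstar, ?_, ?_, ?_⟩
    · have hC' : mv C (mv Ddag zstar) = zstar := by
        simp [mv, Equiv.apply_symm_apply, Matrix.mulVec_mulVec, hC, Matrix.one_mulVec]
      rw [hC', hgrad0]
      have hB0 : mv B (0 : EuclideanSpace ℝ (Fin p)) = 0 := by simp [mv]
      rw [hB0, add_zero]
      simp [mv, Equiv.apply_symm_apply, Matrix.mulVec_mulVec, hADdag]
    · simp [mv, Equiv.apply_symm_apply, Matrix.mulVec_mulVec, hD, Matrix.one_mulVec]
    · simp [mv, Equiv.apply_symm_apply, Matrix.mulVec_mulVec, hC, Matrix.one_mulVec]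
end
end

section
/- Let p, n ≥ 1 and fix real constants L ≥ m > 0. Let A ∈ ℝ^{np×np}, B ∈ ℝ^{np×p}, C, D ∈ ℝ^{p×np}, and suppose there exists D† ∈ ℝ^{np×p} with D D† = I_p, C D† = I_p and (A − I_{np}) D† = 0. Assume that at least one of the pairs (A,C), (A,D) is observable, i.e. either [the only v ∈ ℝ^{np} with C A^k v = 0 for all k ∈ ℕ is v = 0] or [the only v ∈ ℝ^{np} with D A^k v = 0 for all k ∈ ℕ is v = 0]. Then for every H ∈ S(m,L,p) with global minimizer z⋆, the point x⋆ = D† z⋆ is the unique x ∈ ℝ^{np} satisfying x = A x + B ∇H(C x) and D x = C x = z⋆. -/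
/-! A minimizer of `H` is a stationary point, so at any `x` with `C x = z⋆` the gradient term
vanishes and the fixed-point equation reduces to `x = A x`. Two fixed points of `A` with the same
output under `C` (or `D`) differ by a vector that `A` fixes and the output map kills, i.e. an
unobservable vector, which must be zero; `D† z⋆` is such a fixed point because `A D† = D†`. -/

noncomputable section

theorem IsLocalMin.gradient_eq_zero {E : Type*} [NormedAddCommGroup E] [InnerProductSpace ℝ E]
    [CompleteSpace E] {f : E → ℝ} {a : E} (h : IsLocalMin f a) : gradient f a = 0 := by
  simp [gradient, h.fderiv_eq_zero]

namespace Matrix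

variable {ι κ R : Type*} [Fintype ι] [DecidableEq ι] [Ring R]

def IsObservable (C : Matrix κ ι R) (A : Matrix ι ι R) : Prop :=
  ∀ v : ι → R, (∀ k : ℕ, C *ᵥ (A ^ k *ᵥ v) = 0) → v = 0

theorem pow_mulVec_eq_self {A : Matrix ι ι R} {v : ι → R} (h : A *ᵥ v = v) (k : ℕ) :
    A ^ k *ᵥ v = v := by
  induction k with
  | zero => simp
  | succ k ih => rw [pow_succ', ← mulVec_mulVec, ih, h]

theorem IsObservable.eq_of_mulVec_eq_self {C : Matrix κ ι R} {A : Matrix ι ι R}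
    (hobs : IsObservable C A) {u v : ι → R} (hu : A *ᵥ u = u) (hv : A *ᵥ v = v)
    (huv : C *ᵥ u = C *ᵥ v) : u = v := by
  have hfix : A *ᵥ (u - v) = u - v := by rw [mulVec_sub, hu, hv]
  refine sub_eq_zero.mp (hobs _ fun k => ?_)
  rw [pow_mulVec_eq_self hfix, mulVec_sub, huv, sub_self]

end Matrix

section mv

open Matrix

variable {a b c : ℕ}

theorem ofLp_mv (M : Matrix (Fin a) (Fin b) ℝ) (x : EuclideanSpace ℝ (Fin b)) :
    (mv M x).ofLp = M *ᵥ x.ofLp :=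
  rfl

theorem mv_mv (M : Matrix (Fin a) (Fin b) ℝ) (N : Matrix (Fin b) (Fin c) ℝ)
    (x : EuclideanSpace ℝ (Fin c)) : mv M (mv N x) = mv (M * N) x :=
  WithLp.ofLp_injective 2 <| by simp only [ofLp_mv, mulVec_mulVec]

theorem mv_one (x : EuclideanSpace ℝ (Fin a)) : mv 1 x = x :=
  WithLp.ofLp_injective 2 <| by simp only [ofLp_mv, one_mulVec]

theorem mv_zero (M : Matrix (Fin a) (Fin b) ℝ) : mv M 0 = 0 :=
  WithLp.ofLp_injective 2 <| by simp only [ofLp_mv, WithLp.ofLp_zero, mulVec_zero]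

theorem Matrix.IsObservable.eq_of_mv_eq_self {C : Matrix (Fin a) (Fin b) ℝ}
    {A : Matrix (Fin b) (Fin b) ℝ} (hobs : C.IsObservable A) {x y : EuclideanSpace ℝ (Fin b)}
    (hx : mv A x = x) (hy : mv A y = y) (hxy : mv C x = mv C y) : x = y :=
  WithLp.ofLp_injective 2 <|
    hobs.eq_of_mulVec_eq_self (congrArg WithLp.ofLp hx) (congrArg WithLp.ofLp hy)
      (congrArg WithLp.ofLp hxy)

end mv

theorem stmt_1_general (p n : ℕ) (m L : ℝ)
    (A : Matrix (Fin (n*p)) (Fin (n*p)) ℝ) (B : Matrix (Fin (n*p)) (Fin p) ℝ)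
    (C D : Matrix (Fin p) (Fin (n*p)) ℝ)
    (Ddag : Matrix (Fin (n*p)) (Fin p) ℝ)
    (hD : D * Ddag = 1) (hC : C * Ddag = 1) (hA : (A - 1) * Ddag = 0)
    (hobs :
      (∀ v : Fin (n*p) → ℝ, (∀ k : ℕ, C.mulVec ((A ^ k).mulVec v) = 0) → v = 0) ∨
      (∀ v : Fin (n*p) → ℝ, (∀ k : ℕ, D.mulVec ((A ^ k).mulVec v) = 0) → v = 0)) :
    ∀ H ∈ SClass m L p, ∀ zstar : EuclideanSpace ℝ (Fin p), (∀ x, H zstar ≤ H x) →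
      (mv Ddag zstar = mv A (mv Ddag zstar) + mv B (gradient H (mv C (mv Ddag zstar))) ∧
        mv D (mv Ddag zstar) = zstar ∧ mv C (mv Ddag zstar) = zstar) ∧
      (∀ x : EuclideanSpace ℝ (Fin (n*p)),
        (x = mv A x + mv B (gradient H (mv C x)) ∧ mv D x = zstar ∧ mv C x = zstar) →
        x = mv Ddag zstar) := by
  intro H _ zstar hmin
  have hgrad : gradient H zstar = 0 := IsLocalMin.gradient_eq_zero (.of_forall hmin)
  have hAD : A * Ddag = Ddag := by rwa [Matrix.sub_mul, Matrix.one_mul, sub_eq_zero] at hA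
  have hAz : mv A (mv Ddag zstar) = mv Ddag zstar := by rw [mv_mv, hAD]
  have hCz : mv C (mv Ddag zstar) = zstar := by rw [mv_mv, hC, mv_one]
  have hDz : mv D (mv Ddag zstar) = zstar := by rw [mv_mv, hD, mv_one]
  refine ⟨⟨by rw [hCz, hgrad, mv_zero, add_zero, hAz], hDz, hCz⟩, ?_⟩
  rintro x ⟨hx, hDx, hCx⟩
  rw [hCx, hgrad, mv_zero, add_zero] at hx
  rcases hobs with hobs | hobs
  · exact Matrix.IsObservable.eq_of_mv_eq_self hobs hx.symm hAz (hCx.trans hCz.symm)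
  · exact Matrix.IsObservable.eq_of_mv_eq_self hobs hx.symm hAz (hDx.trans hDz.symm)

theorem stmt_1 (p n : ℕ) (hp : 1 ≤ p) (hn : 1 ≤ n) (m L : ℝ) (hm : 0 < m) (hmL : m ≤ L)
    (A : Matrix (Fin (n*p)) (Fin (n*p)) ℝ) (B : Matrix (Fin (n*p)) (Fin p) ℝ)
    (C D : Matrix (Fin p) (Fin (n*p)) ℝ)
    (Ddag : Matrix (Fin (n*p)) (Fin p) ℝ)
    (hD : D * Ddag = 1) (hC : C * Ddag = 1) (hA : (A - 1) * Ddag = 0)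
    (hobs :
      (∀ v : Fin (n*p) → ℝ, (∀ k : ℕ, C.mulVec ((A ^ k).mulVec v) = 0) → v = 0) ∨
      (∀ v : Fin (n*p) → ℝ, (∀ k : ℕ, D.mulVec ((A ^ k).mulVec v) = 0) → v = 0)) :
    ∀ H ∈ SClass m L p, ∀ zstar : EuclideanSpace ℝ (Fin p), (∀ x, H zstar ≤ H x) →
      (mv Ddag zstar = mv A (mv Ddag zstar) + mv B (gradient H (mv C (mv Ddag zstar))) ∧
        mv D (mv Ddag zstar) = zstar ∧ mv C (mv Ddag zstar) = zstar) ∧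
      (∀ x : EuclideanSpace ℝ (Fin (n*p)),
        (x = mv A x + mv B (gradient H (mv C x)) ∧ mv D x = zstar ∧ mv C x = zstar) →
        x = mv Ddag zstar) :=
  stmt_1_general p n m L A B C D Ddag hD hC hA hobs
end
end

section
/- Let ℓ⁻, ℓ⁺ ∈ ℕ and let r : ℤ → ℝ satisfy r_i = 0 whenever i < −ℓ⁻ or i > ℓ⁺. For T ∈ ℕ let M_T ∈ ℝ^{(T+1)×(T+1)} be the banded Toeplitz matrix with entries (M_T)_{kj} = r_{j−k} for k, j ∈ {0, …, T}. Then M_T is doubly hyperdominant for every T ∈ ℕ if and only if r_i ≤ 0 for all i ≠ 0 and Σ_{i=−ℓ⁻}^{ℓ⁺} r_i ≥ 0. -/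
noncomputable section

/-- A square real matrix is doubly hyperdominant if its off-diagonal entries are
nonpositive and all row and column sums are nonnegative. -/
def DoublyHyperdominant {r : ℕ} (M : Matrix (Fin r) (Fin r) ℝ) : Prop :=
  (∀ i j, i ≠ j → M i j ≤ 0) ∧ (∀ i, 0 ≤ ∑ j, M i j) ∧ (∀ j, 0 ≤ ∑ i, M i j)

lemma shift_sum (r : ℤ → ℝ) (T : ℕ) (c : ℤ) (hc : 0 ≤ c) (hc' : c ≤ T) :
    ∑ j : Fin (T + 1), r ((j : ℤ) - c) = ∑ i ∈ Finset.Icc (-c) ((T : ℤ) - c), r i := by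
  rw [Fin.sum_univ_eq_sum_range (fun j => r ((j : ℤ) - c))]
  refine Finset.sum_nbij' (fun j => (j : ℤ) - c) (fun i => (i + c).toNat) ?_ ?_ ?_ ?_ ?_
  · intro a ha; simp only [Finset.mem_range] at ha; simp only [Finset.mem_Icc]; omega
  · intro a ha; simp only [Finset.mem_Icc] at ha; simp only [Finset.mem_range]; omega
  · intro a ha; simp only [Finset.mem_range] at ha; omega
  · intro a ha; simp only [Finset.mem_Icc] at ha; omega
  · intro a _; rfl

lemma shift_sum' (r : ℤ → ℝ) (T : ℕ) (c : ℤ) (hc : 0 ≤ c) (hc' : c ≤ T) :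
    ∑ k : Fin (T + 1), r (c - (k : ℤ)) = ∑ i ∈ Finset.Icc (c - (T : ℤ)) c, r i := by
  rw [Fin.sum_univ_eq_sum_range (fun k => r (c - (k : ℤ)))]
  refine Finset.sum_nbij' (fun k => c - (k : ℤ)) (fun i => (c - i).toNat) ?_ ?_ ?_ ?_ ?_
  · intro a ha; simp only [Finset.mem_range] at ha; simp only [Finset.mem_Icc]; omega
  · intro a ha; simp only [Finset.mem_Icc] at ha; simp only [Finset.mem_range]; omega
  · intro a ha; simp only [Finset.mem_range] at ha; omega
  · intro a ha; simp only [Finset.mem_Icc] at ha; omega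
  · intro a _; rfl

lemma icc_sum_nonneg (lm lp : ℕ) (r : ℤ → ℝ)
    (hr : ∀ i : ℤ, (i < -(lm : ℤ) ∨ (lp : ℤ) < i) → r i = 0)
    (hneg : ∀ i : ℤ, i ≠ 0 → r i ≤ 0)
    (hsum : 0 ≤ ∑ i ∈ Finset.Icc (-(lm : ℤ)) (lp : ℤ), r i)
    (a b : ℤ) (ha : a ≤ 0) (hb : 0 ≤ b) :
    0 ≤ ∑ i ∈ Finset.Icc a b, r i := by
  set F := Finset.Icc (-(lm : ℤ)) (lp : ℤ) with hF
  set S := Finset.Icc a b ∩ F with hS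
  have h1 : ∑ i ∈ S, r i = ∑ i ∈ Finset.Icc a b, r i := by
    apply Finset.sum_subset Finset.inter_subset_left
    intro x hx hx'
    apply hr
    simp only [hS, Finset.mem_inter, hF, Finset.mem_Icc] at hx hx' ⊢
    omega
  have hSF : S ⊆ F := Finset.inter_subset_right
  have h2 : ∑ i ∈ F \ S, r i + ∑ i ∈ S, r i = ∑ i ∈ F, r i := Finset.sum_sdiff hSF
  have h0S : (0 : ℤ) ∈ S := by
    simp only [hS, Finset.mem_inter, hF, Finset.mem_Icc]; omega
  have h3 : ∑ i ∈ F \ S, r i ≤ 0 := by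
    apply Finset.sum_nonpos
    intro i hi
    apply hneg
    intro h0
    rw [h0] at hi
    exact (Finset.mem_sdiff.mp hi).2 h0S
  linarith

theorem stmt_8 (lm lp : ℕ) (r : ℤ → ℝ)
    (hr : ∀ i : ℤ, (i < -(lm : ℤ) ∨ (lp : ℤ) < i) → r i = 0)
    (M : (T : ℕ) → Matrix (Fin (T + 1)) (Fin (T + 1)) ℝ)
    (hM : ∀ (T : ℕ) (k j : Fin (T + 1)), M T k j = r ((j : ℤ) - (k : ℤ))) :
    (∀ T : ℕ, DoublyHyperdominant (M T)) ↔
      ((∀ i : ℤ, i ≠ 0 → r i ≤ 0) ∧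
        0 ≤ ∑ i ∈ Finset.Icc (-(lm : ℤ)) (lp : ℤ), r i) := by
  constructor
  · intro h
    constructor
    · intro i hi
      by_cases hrange : i < -(lm : ℤ) ∨ (lp : ℤ) < i
      · rw [hr i hrange]
      · push_neg at hrange
        obtain ⟨h1, h2⟩ := hrange
        set T := lm + lp with hT
        have hkT : lm < T + 1 := by omega
        have hjT : ((lm : ℤ) + i).toNat < T + 1 := by omega
        set k : Fin (T + 1) := ⟨lm, hkT⟩ with hk
        set j : Fin (T + 1) := ⟨((lm : ℤ) + i).toNat, hjT⟩ with hj
        have hne : k ≠ j := by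
          intro he
          apply hi
          have := congrArg (Fin.val) he
          simp only [hk, hj] at this
          omega
        have := (h T).1 k j hne
        rw [hM] at this
        have hji : (j : ℤ) - (k : ℤ) = i := by
          simp only [hk, hj]
          omega
        rwa [hji] at this
    · set T := lm + lp with hT
      have hkT : lm < T + 1 := by omega
      set k : Fin (T + 1) := ⟨lm, hkT⟩ with hk
      have := (h T).2.1 k
      have heq : ∑ j, M T k j = ∑ i ∈ Finset.Icc (-(lm : ℤ)) (lp : ℤ), r i := by
        rw [Finset.sum_congr rfl (fun j _ => hM T k j)]
        have hkv : ((k : ℕ) : ℤ) = (lm : ℤ) := by simp [hk]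
        rw [hkv, shift_sum r T (lm : ℤ) (by positivity) (by omega)]
        congr 1
        · congr 1
          push_cast [hT]
          ring
      rwa [heq] at this
  · rintro ⟨hneg, hsum⟩ T
    refine ⟨?_, ?_, ?_⟩
    · intro k j hkj
      rw [hM]
      apply hneg
      intro h0
      apply hkj
      apply Fin.ext
      omega
    · intro k
      rw [Finset.sum_congr rfl (fun j _ => hM T k j),
        shift_sum r T (k : ℤ) (by positivity) (by exact_mod_cast Nat.le_of_lt_succ k.isLt)]
      exact icc_sum_nonneg lm lp r hr hneg hsum _ _ (by omega)
        (by have := Nat.le_of_lt_succ k.isLt; omega)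
    · intro j
      rw [Finset.sum_congr rfl (fun k _ => hM T k j),
        shift_sum' r T (j : ℤ) (by positivity) (by exact_mod_cast Nat.le_of_lt_succ j.isLt)]
      exact icc_sum_nonneg lm lp r hr hneg hsum _ _
        (by have := Nat.le_of_lt_succ j.isLt; omega) (by omega)
end
end

section
/- Let n ≥ 1, let M = (m_{ij}) ∈ ℝ^{n×n} be doubly hyperdominant, and let f : ℝ → ℝ be monotone nondecreasing with σ · f(σ) ≥ 0 for all σ ∈ ℝ. Then for every y ∈ ℝ^n, Σ_{i=1}^{n} Σ_{j=1}^{n} m_{ij} f(y_i) y_j ≥ 0. -/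
/-!
Split `f (y i)` and `y j` into positive and negative parts. Since `σ` and `f σ` never have
opposite signs, a positive part of one meets a negative part of the other only off the
diagonal, where `M` is nonpositive, so the two mixed terms have the right sign. The two pure
terms have the shape `∑ M i j * g (z i) * h (z j)` with `g`, `h` nonnegative and monotone:
subtracting the values at an index `k` where `z` is minimal leaves two terms controlled by the
row and column sums, plus the same form for the principal submatrix without `k`, which is
again doubly hyperdominant.
-/

noncomputable section

open Finset

variable {ι : Type*}

structure DoublyHyperdominantOn (M : Matrix ι ι ℝ) (s : Finset ι) : Prop where
  off_diag_nonpos : ∀ i ∈ s, ∀ j ∈ s, i ≠ j → M i j ≤ 0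
  row_sum_nonneg : ∀ i ∈ s, 0 ≤ ∑ j ∈ s, M i j
  col_sum_nonneg : ∀ j ∈ s, 0 ≤ ∑ i ∈ s, M i j

theorem DoublyHyperdominant.on_univ {r : ℕ} {M : Matrix (Fin r) (Fin r) ℝ}
    (hM : DoublyHyperdominant M) : DoublyHyperdominantOn M univ where
  off_diag_nonpos i _ j _ := hM.1 i j
  row_sum_nonneg i _ := hM.2.1 i
  col_sum_nonneg j _ := hM.2.2 j

lemma posPart_mul_negPart_eq_zero_of_mul_nonneg {a b : ℝ} (h : 0 ≤ a * b) : a⁺ * b⁻ = 0 := by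
  rcases lt_or_ge b 0 with hb | hb
  · rw [posPart_eq_zero.2 (nonpos_of_mul_nonneg_left h hb), zero_mul]
  · rw [negPart_eq_zero.2 hb, mul_zero]

section

variable (M : Matrix ι ι ℝ) (s : Finset ι)

lemma sum_mul_mul_eq_posPart_negPart (a b : ι → ℝ) :
    ∑ i ∈ s, ∑ j ∈ s, M i j * a i * b j =
      ∑ i ∈ s, ∑ j ∈ s, M i j * (a i)⁺ * (b j)⁺ - ∑ i ∈ s, ∑ j ∈ s, M i j * (a i)⁺ * (b j)⁻
        - ∑ i ∈ s, ∑ j ∈ s, M i j * (a i)⁻ * (b j)⁺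
        + ∑ i ∈ s, ∑ j ∈ s, M i j * (a i)⁻ * (b j)⁻ := by
  simp only [← sum_sub_distrib, ← sum_add_distrib]
  refine sum_congr rfl fun i _ => sum_congr rfl fun j _ => ?_
  linear_combination (-M i j * b j) * posPart_sub_negPart (a i)
    - M i j * ((a i)⁺ - (a i)⁻) * posPart_sub_negPart (b j)

lemma sum_mul_mul_eq_sum_sub_mul_sub (a b : ι → ℝ) (c d : ℝ) :
    ∑ i ∈ s, ∑ j ∈ s, M i j * a i * b j =
      ∑ i ∈ s, ∑ j ∈ s, M i j * (a i - c) * (b j - d)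
        + c * ∑ j ∈ s, (∑ i ∈ s, M i j) * (b j - d) + d * ∑ i ∈ s, (∑ j ∈ s, M i j) * a i := by
  simp only [mul_sum, sum_mul]
  rw [sum_comm (s := s) (t := s) (f := fun j i => c * (M i j * (b j - d)))]
  simp only [← sum_add_distrib]
  exact sum_congr rfl fun i _ => sum_congr rfl fun j _ => by ring

lemma sum_mul_mul_nonpos_of_mul_eq_zero (hoff : ∀ i ∈ s, ∀ j ∈ s, i ≠ j → M i j ≤ 0)
    {a b : ι → ℝ} (ha : ∀ i ∈ s, 0 ≤ a i) (hb : ∀ j ∈ s, 0 ≤ b j)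
    (hab : ∀ i ∈ s, a i * b i = 0) :
    ∑ i ∈ s, ∑ j ∈ s, M i j * a i * b j ≤ 0 := by
  refine sum_nonpos fun i hi => sum_nonpos fun j hj => ?_
  obtain rfl | hij := eq_or_ne i j
  · rw [mul_assoc, hab i hi, mul_zero]
  · rw [mul_assoc]
    exact mul_nonpos_of_nonpos_of_nonneg (hoff i hi j hj hij) (mul_nonneg (ha i hi) (hb j hj))

end

namespace DoublyHyperdominantOn

variable [DecidableEq ι] {M : Matrix ι ι ℝ} {s : Finset ι}

theorem erase (hM : DoublyHyperdominantOn M s) {k : ι} (hk : k ∈ s) :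
    DoublyHyperdominantOn M (s.erase k) where
  off_diag_nonpos i hi j hj :=
    hM.off_diag_nonpos i (mem_of_mem_erase hi) j (mem_of_mem_erase hj)
  row_sum_nonneg i hi := by
    rw [sum_erase_eq_sub hk]
    linarith [hM.row_sum_nonneg i (mem_of_mem_erase hi),
      hM.off_diag_nonpos i (mem_of_mem_erase hi) k hk (ne_of_mem_erase hi)]
  col_sum_nonneg j hj := by
    rw [sum_erase_eq_sub hk]
    linarith [hM.col_sum_nonneg j (mem_of_mem_erase hj),
      hM.off_diag_nonpos k hk j (mem_of_mem_erase hj) (ne_of_mem_erase hj).symm]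

theorem sum_mul_mul_nonneg_of_monotone {α : Type*} [LinearOrder α]
    (hM : DoublyHyperdominantOn M s) {g h : α → ℝ} (hg : Monotone g) (hh : Monotone h)
    (z : ι → α) (hg0 : ∀ i ∈ s, 0 ≤ g (z i)) (hh0 : ∀ i ∈ s, 0 ≤ h (z i)) :
    0 ≤ ∑ i ∈ s, ∑ j ∈ s, M i j * g (z i) * h (z j) := by
  induction s using Finset.strongInduction generalizing g h with
  | H s ih =>
  obtain rfl | hs := s.eq_empty_or_nonempty
  · simp
  obtain ⟨k, hk, hmin⟩ := s.exists_min_image z hs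
  set c := g (z k)
  set d := h (z k)
  have hsub : 0 ≤ ∑ i ∈ s, ∑ j ∈ s, M i j * (g (z i) - c) * (h (z j) - d) := by
    rw [← sum_erase s (a := k) (by simp [c])]
    rw [sum_congr rfl fun i _ => (sum_erase s (a := k) (by simp [d])).symm]
    exact ih _ (erase_ssubset hk) (hM.erase hk)
      (fun _ _ hab => sub_le_sub_right (hg hab) c) (fun _ _ hab => sub_le_sub_right (hh hab) d)
      (fun i hi => sub_nonneg.2 (hg (hmin i (mem_of_mem_erase hi))))
      (fun j hj => sub_nonneg.2 (hh (hmin j (mem_of_mem_erase hj))))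
  have hcol : 0 ≤ ∑ j ∈ s, (∑ i ∈ s, M i j) * (h (z j) - d) :=
    sum_nonneg fun j hj => mul_nonneg (hM.col_sum_nonneg j hj) (sub_nonneg.2 (hh (hmin j hj)))
  have hrow : 0 ≤ ∑ i ∈ s, (∑ j ∈ s, M i j) * g (z i) :=
    sum_nonneg fun i hi => mul_nonneg (hM.row_sum_nonneg i hi) (hg0 i hi)
  rw [sum_mul_mul_eq_sum_sub_mul_sub M s _ _ c d]
  have := mul_nonneg (hg0 k hk) hcol
  have := mul_nonneg (hh0 k hk) hrow
  linarith

theorem sum_mul_apply_mul_nonneg (hM : DoublyHyperdominantOn M s) {f : ℝ → ℝ}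
    (hf : Monotone f) (hsign : ∀ σ : ℝ, 0 ≤ σ * f σ) (y : ι → ℝ) :
    0 ≤ ∑ i ∈ s, ∑ j ∈ s, M i j * f (y i) * y j := by
  have hpp : 0 ≤ ∑ i ∈ s, ∑ j ∈ s, M i j * (f (y i))⁺ * (y j)⁺ :=
    hM.sum_mul_mul_nonneg_of_monotone (posPart_mono.comp hf) posPart_mono y
      (fun _ _ => posPart_nonneg _) (fun _ _ => posPart_nonneg _)
  -- Reading `y` in `ℝᵒᵈ` makes the antitone negative parts monotone.
  have hnn : 0 ≤ ∑ i ∈ s, ∑ j ∈ s, M i j * (f (y i))⁻ * (y j)⁻ :=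
    hM.sum_mul_mul_nonneg_of_monotone (negPart_anti.comp_monotone hf).dual_left
      negPart_anti.dual_left (OrderDual.toDual ∘ y)
      (fun _ _ => negPart_nonneg _) (fun _ _ => negPart_nonneg _)
  have hpn := sum_mul_mul_nonpos_of_mul_eq_zero M s hM.off_diag_nonpos
    (fun i _ => posPart_nonneg (f (y i))) (fun j _ => negPart_nonneg (y j))
    (fun i _ => posPart_mul_negPart_eq_zero_of_mul_nonneg (by rw [mul_comm]; exact hsign (y i)))
  have hnp := sum_mul_mul_nonpos_of_mul_eq_zero M s hM.off_diag_nonpos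
    (fun i _ => negPart_nonneg (f (y i))) (fun j _ => posPart_nonneg (y j))
    (fun i _ => by rw [mul_comm]; exact posPart_mul_negPart_eq_zero_of_mul_nonneg (hsign (y i)))
  rw [sum_mul_mul_eq_posPart_negPart M s (fun i => f (y i)) y]
  linarith

end DoublyHyperdominantOn

theorem stmt_9_general (n : ℕ) (M : Matrix (Fin n) (Fin n) ℝ)
    (hM : DoublyHyperdominant M)
    (f : ℝ → ℝ) (hmono : Monotone f) (hsign : ∀ σ : ℝ, 0 ≤ σ * f σ)
    (y : Fin n → ℝ) :
    0 ≤ ∑ i, ∑ j, M i j * f (y i) * y j :=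
  hM.on_univ.sum_mul_apply_mul_nonneg hmono hsign y

theorem stmt_9 (n : ℕ) (hn : 1 ≤ n) (M : Matrix (Fin n) (Fin n) ℝ)
    (hM : DoublyHyperdominant M)
    (f : ℝ → ℝ) (hmono : Monotone f) (hsign : ∀ σ : ℝ, 0 ≤ σ * f σ)
    (y : Fin n → ℝ) :
    0 ≤ ∑ i, ∑ j, M i j * f (y i) * y j :=
  stmt_9_general n M hM f hmono hsign y
end
end
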